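/- Let M and N be HPTP linear maps on M_d(ℂ). Then the physical implementability is subadditive under composition: ν(M ∘ N) ≤ ν(M) + ν(N), equivalently 2^{ν(M ∘ N)} ≤ 2^{ν(M)} · 2^{ν(N)}. -/

import Mathlib

open scoped Kronecker ComplexOrder
open Matrix

noncomputable section

/-- `id_k ⊗ N` applied blockwise. -/
def idTensor {n m : Type*} (k : Type*)
    (N : Matrix n n ℂ → Matrix m m ℂ)
    (M : Matrix (k × n) (k × n) ℂ) : Matrix (k × m) (k × m) ℂ :=
  Matrix.of fun p q => N (Matrix.of fun a b => M (p.1, a) (q.1, b)) p.2 q.2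

/-- Trace-preserving. -/
def IsTP {n m : Type*} [Fintype n] [Fintype m]
    (N : Matrix n n ℂ → Matrix m m ℂ) : Prop :=
  ∀ X, (N X).trace = X.trace

/-- Hermitian-preserving. -/
def IsHP {n m : Type*} (N : Matrix n n ℂ → Matrix m m ℂ) : Prop :=
  ∀ X, X.IsHermitian → (N X).IsHermitian

/-- Completely positive: for every `k`, `id_k ⊗ N` preserves positive semidefiniteness. -/
def IsCP {n m : Type*} [Fintype n] [Fintype m]
    (N : Matrix n n ℂ → Matrix m m ℂ) : Prop :=
  ∀ (k : ℕ) (M : Matrix (Fin k × n) (Fin k × n) ℂ),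
    M.PosSemidef → (idTensor (Fin k) N M).PosSemidef

/-- Completely positive and trace-preserving (quantum channel). -/
def IsCPTP {n m : Type*} [Fintype n] [Fintype m]
    (N : Matrix n n ℂ → Matrix m m ℂ) : Prop :=
  IsLinearMap ℂ N ∧ IsCP N ∧ IsTP N

/-- Completely positive and trace non-increasing. -/
def IsCPTN {n m : Type*} [Fintype n] [Fintype m]
    (N : Matrix n n ℂ → Matrix m m ℂ) : Prop :=
  IsLinearMap ℂ N ∧ IsCP N ∧ ∀ X : Matrix n n ℂ, X.PosSemidef → (N X).trace ≤ X.trace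

/-- Costs of finite quasiprobability decompositions of `N` into CPTP maps. -/
def decompCosts {n m : Type*} [Fintype n] [Fintype m]
    (N : Matrix n n ℂ → Matrix m m ℂ) : Set ℝ :=
  { c | ∃ (s : ℕ) (η : Fin s → ℝ) (O : Fin s → (Matrix n n ℂ → Matrix m m ℂ)),
      (∀ i, IsCPTP (O i)) ∧ (∀ X, N X = ∑ i, (η i : ℂ) • O i X) ∧ c = ∑ i, |η i| }

/-- The physical implementability `ν(N)`. -/
noncomputable def nu {n m : Type*} [Fintype n] [Fintype m]
    (N : Matrix n n ℂ → Matrix m m ℂ) : ℝ :=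
  Real.logb 2 (sInf (decompCosts N))

/-- The Choi matrix of a linear map. -/
def choiMatrix {n m : Type*} [DecidableEq n]
    (N : Matrix n n ℂ → Matrix m m ℂ) : Matrix (n × m) (n × m) ℂ :=
  Matrix.of fun p q => N (Matrix.single p.1 q.1 1) p.2 q.2

/-- Partial trace over the second tensor factor. -/
def ptraceB {n m : Type*} [Fintype m] (J : Matrix (n × m) (n × m) ℂ) :
    Matrix n n ℂ :=
  Matrix.of fun i j => ∑ a, J (i, a) (j, a)

/-- The trace norm of a matrix. -/
noncomputable def traceNorm {k : Type*} [Fintype k] [DecidableEq k]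
    (X : Matrix k k ℂ) : ℝ :=
  (((Matrix.posSemidef_conjTranspose_mul_self X).1.eigenvectorUnitary : Matrix k k ℂ) *
    Matrix.diagonal (((↑) : ℝ → ℂ) ∘ (Real.sqrt ·) ∘ (Matrix.posSemidef_conjTranspose_mul_self X).1.eigenvalues) *
    (star ((Matrix.posSemidef_conjTranspose_mul_self X).1.eigenvectorUnitary : Matrix k k ℂ))).trace.re

/-- Tensor product of two maps. -/
def tensorMap {n₁ n₂ m₂ : Type*} [Fintype n₁] [DecidableEq n₁]
    (M : Matrix n₁ n₁ ℂ → Matrix n₁ n₁ ℂ) (N : Matrix n₂ n₂ ℂ → Matrix m₂ m₂ ℂ)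
    (X : Matrix (n₁ × n₂) (n₁ × n₂) ℂ) : Matrix (n₁ × m₂) (n₁ × m₂) ℂ :=
  ∑ i : n₁, ∑ j : n₁,
    (M (Matrix.single i j 1)) ⊗ₖ (N (Matrix.of fun a b => X (i, a) (j, b)))

/-!
Decompositions compose: if `M = ∑ ηᵢ Oᵢ` and `N = ∑ ξⱼ Pⱼ` with channels `Oᵢ`, `Pⱼ`, then
`M ∘ N = ∑ ηᵢ ξⱼ Oᵢ ∘ Pⱼ` has cost `(∑ |ηᵢ|) (∑ |ξⱼ|)`, so the optimal cost is submultiplicative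
and `log₂` turns this into subadditivity. Splitting the logarithm needs both infima to be finite
and at least `1`: every HPTP map has a decomposition, obtained by shifting its Hermitian Choi
matrix to a positive one, and trace preservation forces `∑ ηᵢ = 1` for any decomposition.
-/

variable {n m : Type*}

lemma Matrix.PosSemidef.sum_sum_apply {r p ι : Type*} [Fintype r] [Fintype p] [Fintype ι]
    {A : Matrix r r ℂ} (hA : A.PosSemidef) (g : p → ι → r) :
    (Matrix.of fun x y => ∑ i, ∑ j, A (g x i) (g y j)).PosSemidef := by
  classical
  let W : Matrix (p × ι) p ℂ := Matrix.of fun z x => if z.1 = x then 1 else 0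
  convert (hA.submatrix fun z : p × ι => g z.1 z.2).conjTranspose_mul_mul_same W using 1
  ext x y
  simp [W, Matrix.mul_apply, Fintype.sum_prod_type]
  exact Finset.sum_comm

open scoped Matrix.Norms.L2Operator MatrixOrder in
lemma Matrix.IsHermitian.exists_posSemidef_add_smul_one {k : Type*} [Fintype k] [DecidableEq k]
    {J : Matrix k k ℂ} (hJ : J.IsHermitian) : ∃ C : ℝ, 0 ≤ C ∧ (J + (C : ℂ) • 1).PosSemidef := by
  refine ⟨‖J‖, norm_nonneg J, ?_⟩
  have := IsSelfAdjoint.neg_algebraMap_norm_le_self hJ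
  rw [← Matrix.nonneg_iff_posSemidef]
  simpa [neg_le_iff_add_nonneg, Algebra.algebraMap_eq_smul_one] using this

lemma Real.sInf_le_sInf_mul_sInf {A B C : Set ℝ} (hA : A.Nonempty) (hB : B.Nonempty)
    (hA₀ : ∀ a ∈ A, 0 ≤ a) (hB₀ : ∀ b ∈ B, 0 ≤ b) (hC : BddBelow C)
    (hmul : ∀ a ∈ A, ∀ b ∈ B, a * b ∈ C) : sInf C ≤ sInf A * sInf B := by
  have hle : ∀ b ∈ B, sInf C ≤ sInf A * b := fun b hb => by
    rw [mul_comm, ← smul_eq_mul, ← Real.sInf_smul_of_nonneg (hB₀ b hb)]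
    refine csInf_le_csInf hC (hA.smul_set) ?_
    rintro _ ⟨a, ha, rfl⟩
    simpa only [smul_eq_mul, mul_comm b a] using hmul a ha b hb
  rw [← smul_eq_mul, ← Real.sInf_smul_of_nonneg (Real.sInf_nonneg hA₀)]
  refine le_csInf hB.smul_set ?_
  rintro _ ⟨b, hb, rfl⟩
  exact hle b hb

lemma IsHP.map_conjTranspose {N : Matrix n n ℂ → Matrix m m ℂ} (hHP : IsHP N)
    (hlin : IsLinearMap ℂ N) (X : Matrix n n ℂ) : N Xᴴ = (N X)ᴴ := by
  set H₁ := X + Xᴴ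
  set H₂ := Complex.I • (X - Xᴴ)
  have h₁ : (N H₁).IsHermitian := hHP _ (isHermitian_add_transpose_self X)
  have h₂ : (N H₂).IsHermitian := hHP _ <| by
    simp only [H₂, IsHermitian, conjTranspose_smul, conjTranspose_sub, conjTranspose_conjTranspose,
      Complex.star_def, Complex.conj_I]
    module
  calc N Xᴴ = N ((2:ℂ)⁻¹ • (H₁ + Complex.I • H₂)) := by
        congr 1; simp only [H₁, H₂, smul_smul, Complex.I_mul_I]; module
    _ = (N ((2:ℂ)⁻¹ • (H₁ - Complex.I • H₂)))ᴴ := by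
        simp only [hlin.map_smul, hlin.map_add, hlin.map_sub, conjTranspose_smul,
          conjTranspose_sub, h₁.eq, h₂.eq, Complex.star_def, Complex.conj_I, map_inv₀, map_ofNat]
        module
    _ = (N X)ᴴ := by
        congr 2; simp only [H₁, H₂, smul_smul, Complex.I_mul_I]; module

lemma IsTP.comp {n₁ n₂ n₃ : Type*} [Fintype n₁] [Fintype n₂] [Fintype n₃]
    {M : Matrix n₂ n₂ ℂ → Matrix n₃ n₃ ℂ} {N : Matrix n₁ n₁ ℂ → Matrix n₂ n₂ ℂ}
    (hM : IsTP M) (hN : IsTP N) : IsTP (M ∘ N) :=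
  fun X => (hM (N X)).trans (hN X)

lemma IsCPTP.comp {n₁ n₂ n₃ : Type*} [Fintype n₁] [Fintype n₂] [Fintype n₃]
    {M : Matrix n₂ n₂ ℂ → Matrix n₃ n₃ ℂ} {N : Matrix n₁ n₁ ℂ → Matrix n₂ n₂ ℂ}
    (hM : IsCPTP M) (hN : IsCPTP N) : IsCPTP (M ∘ N) :=
  ⟨((IsLinearMap.mk' M hM.1).comp (IsLinearMap.mk' N hN.1)).isLinear,
    fun k X hX => hM.2.1 k _ (hN.2.1 k X hX), hM.2.2.comp hN.2.2⟩

lemma choiMatrix_isHermitian [DecidableEq n] {N : Matrix n n ℂ → Matrix m m ℂ} (hHP : IsHP N)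
    (hlin : IsLinearMap ℂ N) : (choiMatrix N).IsHermitian := by
  ext p q
  rw [conjTranspose_apply]
  simp only [choiMatrix, of_apply]
  rw [← conjTranspose_apply, ← hHP.map_conjTranspose hlin, conjTranspose_single, star_one]

lemma ptraceB_choiMatrix [Fintype n] [Fintype m] [DecidableEq n]
    {N : Matrix n n ℂ → Matrix m m ℂ} (hTP : IsTP N) : ptraceB (choiMatrix N) = 1 := by
  ext i j
  have : ptraceB (choiMatrix N) i j = (N (single i j 1)).trace := rfl
  rw [this, hTP]
  by_cases hij : i = j
  · subst hij; simp
  · simp [hij, trace_single_eq_of_ne]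

lemma ptraceB_add [Fintype m] (J K : Matrix (n × m) (n × m) ℂ) :
    ptraceB (J + K) = ptraceB J + ptraceB K := by
  ext i j
  simp [ptraceB, Finset.sum_add_distrib]

lemma ptraceB_smul [Fintype m] (c : ℂ) (J : Matrix (n × m) (n × m) ℂ) :
    ptraceB (c • J) = c • ptraceB J := by
  ext i j
  simp [ptraceB, Finset.mul_sum]

lemma ptraceB_one [Fintype m] [DecidableEq n] [DecidableEq m] :
    ptraceB (1 : Matrix (n × m) (n × m) ℂ) = (Fintype.card m : ℂ) • 1 := by
  ext i j
  by_cases hij : i = j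
  · subst hij; simp [ptraceB]
  · simp [ptraceB, one_apply, hij]

/-- The inverse of the Choi–Jamiołkowski isomorphism. -/
def mapOfChoi [Fintype n] (J : Matrix (n × m) (n × m) ℂ) (X : Matrix n n ℂ) : Matrix m m ℂ :=
  Matrix.of fun a b => ∑ i, ∑ j, X i j * J (i, a) (j, b)

section mapOfChoi

variable [Fintype n]

lemma mapOfChoi_add (J K : Matrix (n × m) (n × m) ℂ) :
    mapOfChoi (J + K) = mapOfChoi J + mapOfChoi K := by
  ext X a b
  simp [mapOfChoi, mul_add, Finset.sum_add_distrib]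

lemma mapOfChoi_smul (c : ℂ) (J : Matrix (n × m) (n × m) ℂ) :
    mapOfChoi (c • J) = c • mapOfChoi J := by
  ext X a b
  simp [mapOfChoi, Finset.mul_sum, mul_left_comm]

lemma mapOfChoi_choiMatrix [DecidableEq n] {N : Matrix n n ℂ → Matrix m m ℂ}
    (hlin : IsLinearMap ℂ N) : mapOfChoi (choiMatrix N) = N := by
  ext X a b
  have hX : N X = ∑ i, ∑ j, X i j • N (single i j 1) := by
    conv_lhs => rw [matrix_eq_sum_single X]
    change IsLinearMap.mk' N hlin _ = _
    simp [map_sum, ← hlin.map_smul, smul_single]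
  simp [hX, mapOfChoi, choiMatrix, Matrix.sum_apply]

lemma isLinearMap_mapOfChoi (J : Matrix (n × m) (n × m) ℂ) : IsLinearMap ℂ (mapOfChoi J) where
  map_add X Y := by ext a b; simp [mapOfChoi, add_mul, Finset.sum_add_distrib]
  map_smul c X := by ext a b; simp [mapOfChoi, Finset.mul_sum, mul_assoc]

lemma trace_mapOfChoi [Fintype m] (J : Matrix (n × m) (n × m) ℂ) (X : Matrix n n ℂ) :
    (mapOfChoi J X).trace = ∑ i, ∑ j, X i j * ptraceB J i j := by
  simp only [trace, diag_apply, mapOfChoi, ptraceB, of_apply, Finset.mul_sum]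
  rw [Finset.sum_comm]
  exact Finset.sum_congr rfl fun i _ => Finset.sum_comm

lemma isCP_mapOfChoi [Fintype m] {J : Matrix (n × m) (n × m) ℂ} (hJ : J.PosSemidef) :
    IsCP (mapOfChoi J) := by
  intro k M hM
  have : idTensor (Fin k) (mapOfChoi J) M = Matrix.of fun p q =>
      ∑ i, ∑ j, (M ⊗ₖ J) ((p.1, i), (i, p.2)) ((q.1, j), (j, q.2)) := by
    ext p q
    simp [idTensor, mapOfChoi]
  rw [this]
  exact (hM.kronecker hJ).sum_sum_apply (p := Fin k × m) (ι := n) fun p i => ((p.1, i), (i, p.2))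

lemma isCPTP_mapOfChoi [Fintype m] [DecidableEq n] {J : Matrix (n × m) (n × m) ℂ}
    (hJ : J.PosSemidef) (hJ₁ : ptraceB J = 1) : IsCPTP (mapOfChoi J) := by
  refine ⟨isLinearMap_mapOfChoi J, isCP_mapOfChoi hJ, fun X => ?_⟩
  rw [trace_mapOfChoi, hJ₁]
  simp [one_apply, trace]

end mapOfChoi

section decompCosts

variable {n₁ n₂ n₃ : Type*} [Fintype n] [Fintype m] [Fintype n₁] [Fintype n₂] [Fintype n₃]

lemma nonneg_of_mem_decompCosts {N : Matrix n n ℂ → Matrix m m ℂ} {c : ℝ}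
    (hc : c ∈ decompCosts N) : 0 ≤ c := by
  obtain ⟨s, η, O, -, -, rfl⟩ := hc
  exact Finset.sum_nonneg fun i _ => abs_nonneg (η i)

lemma bddBelow_decompCosts (N : Matrix n n ℂ → Matrix m m ℂ) : BddBelow (decompCosts N) :=
  ⟨0, fun _ => nonneg_of_mem_decompCosts⟩

lemma sum_abs_mem_decompCosts {ι : Type*} [Fintype ι] {N : Matrix n n ℂ → Matrix m m ℂ}
    (η : ι → ℝ) (O : ι → Matrix n n ℂ → Matrix m m ℂ) (hO : ∀ i, IsCPTP (O i))
    (hN : ∀ X, N X = ∑ i, (η i : ℂ) • O i X) : ∑ i, |η i| ∈ decompCosts N := by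
  let e := (Fintype.equivFin ι).symm
  refine ⟨Fintype.card ι, η ∘ e, O ∘ e, fun i => hO (e i), fun X => ?_, ?_⟩
  · rw [hN]
    exact (e.sum_comp fun i => (η i : ℂ) • O i X).symm
  · exact (e.sum_comp fun i => |η i|).symm

lemma one_le_of_mem_decompCosts [Nonempty n] {N : Matrix n n ℂ → Matrix m m ℂ} (hTP : IsTP N)
    {c : ℝ} (hc : c ∈ decompCosts N) : 1 ≤ c := by
  classical
  obtain ⟨s, η, O, hO, hN, rfl⟩ := hc
  obtain ⟨i⟩ := ‹Nonempty n›
  have hsum : ∑ k, η k = 1 := by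
    have h := congrArg trace (hN (single i i 1))
    rw [hTP, trace_sum] at h
    simp only [trace_smul, fun k => (hO k).2.2 (single i i 1), trace_single_eq_same, smul_eq_mul,
      mul_one] at h
    exact_mod_cast h.symm
  exact hsum ▸ Finset.abs_sum_le_sum_abs η Finset.univ |>.trans' (le_abs_self _)

lemma one_le_sInf_decompCosts [Nonempty n] {N : Matrix n n ℂ → Matrix m m ℂ} (hTP : IsTP N)
    (hne : (decompCosts N).Nonempty) : 1 ≤ sInf (decompCosts N) :=
  le_csInf hne fun _ => one_le_of_mem_decompCosts hTP

lemma nu_of_isEmpty [IsEmpty m] (N : Matrix n n ℂ → Matrix m m ℂ) : nu N = 0 := by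
  have h0 : (0 : ℝ) ∈ decompCosts N :=
    ⟨0, Fin.elim0, Fin.elim0, fun i => i.elim0, fun _ => Subsingleton.elim _ _, by simp⟩
  rw [nu, (IsLeast.csInf_eq ⟨h0, fun _ => nonneg_of_mem_decompCosts⟩), Real.logb_zero]

lemma mul_mem_decompCosts {M : Matrix n₂ n₂ ℂ → Matrix n₃ n₃ ℂ}
    {N : Matrix n₁ n₁ ℂ → Matrix n₂ n₂ ℂ} (hlin : IsLinearMap ℂ M) {a b : ℝ}
    (ha : a ∈ decompCosts M) (hb : b ∈ decompCosts N) : a * b ∈ decompCosts (M ∘ N) := by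
  obtain ⟨s, η, O, hO, hM, rfl⟩ := ha
  obtain ⟨t, ξ, P, hP, hN, rfl⟩ := hb
  have hcost : (∑ i, |η i|) * ∑ j, |ξ j| = ∑ k : Fin s × Fin t, |η k.1 * ξ k.2| := by
    simp [Finset.sum_mul_sum, Fintype.sum_prod_type, abs_mul]
  rw [hcost]
  refine sum_abs_mem_decompCosts _ (fun k => O k.1 ∘ P k.2) (fun k => (hO _).comp (hP _))
    fun X => ?_
  calc M (N X) = IsLinearMap.mk' M hlin (∑ j, (ξ j : ℂ) • P j X) := by rw [hN]; rfl
    _ = ∑ j, (ξ j : ℂ) • M (P j X) := by simp [map_sum]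
    _ = _ := by
        simp only [hM, Finset.smul_sum, smul_smul, Fintype.sum_prod_type, Complex.ofReal_mul,
          Function.comp_apply]
        rw [Finset.sum_comm]
        simp only [mul_comm]

lemma decompCosts_nonempty [Nonempty m] {N : Matrix n n ℂ → Matrix m m ℂ}
    (hlin : IsLinearMap ℂ N) (hHP : IsHP N) (hTP : IsTP N) : (decompCosts N).Nonempty := by
  classical
  obtain ⟨C, hC, hpsd⟩ := (choiMatrix_isHermitian hHP hlin).exists_posSemidef_add_smul_one
  set D : ℝ := (Fintype.card m : ℝ)
  have hD : 0 < D := Nat.cast_pos.mpr Fintype.card_pos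
  set c : ℝ := 1 + C * D
  have hc : 0 < c := by positivity
  -- `N = c • O₀ - (c - 1) • O₁`, where `O₁ X = (tr X / D) • 1` is the completely depolarising
  -- channel and `c` is fixed by requiring `O₀` to be trace preserving.
  let O₀ := mapOfChoi (((c⁻¹ : ℝ) : ℂ) • (choiMatrix N + (C : ℂ) • 1))
  let O₁ := mapOfChoi (((D⁻¹ : ℝ) : ℂ) • (1 : Matrix (n × m) (n × m) ℂ))
  refine ⟨_, sum_abs_mem_decompCosts ![c, -(C * D)] ![O₀, O₁] ?_ fun X => ?_⟩
  · intro i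
    fin_cases i
    · refine isCPTP_mapOfChoi (hpsd.smul (Complex.zero_le_real.mpr (by positivity))) ?_
      rw [ptraceB_smul, ptraceB_add, ptraceB_choiMatrix hTP, ptraceB_smul, ptraceB_one]
      match_scalars
      push_cast [c, D]
      field_simp
    · refine isCPTP_mapOfChoi (PosSemidef.one.smul (Complex.zero_le_real.mpr (by positivity))) ?_
      rw [ptraceB_smul, ptraceB_one]
      match_scalars
      push_cast [D]
      field_simp
  · have hc' : (c : ℂ) * ((c⁻¹ : ℝ) : ℂ) = 1 := by push_cast; field_simp
    have hD' : ((-(C * D) : ℝ) : ℂ) * ((D⁻¹ : ℝ) : ℂ) = -C := by push_cast; field_simp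
    simp only [Fin.sum_univ_two, Matrix.cons_val_zero, Matrix.cons_val_one, O₀, O₁,
      mapOfChoi_smul, mapOfChoi_add, mapOfChoi_choiMatrix hlin, Pi.smul_apply, Pi.add_apply,
      smul_smul, hc', hD', one_smul]
    module

end decompCosts

/-- subadditivity w.r.t. composition: `ν(M ∘ N) ≤ ν(M) + ν(N)`. -/
theorem nu_comp_subadditive {d : ℕ}
    (M N : Matrix (Fin d) (Fin d) ℂ → Matrix (Fin d) (Fin d) ℂ)
    (hMlin : IsLinearMap ℂ M) (hMHP : IsHP M) (hMTP : IsTP M)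
    (hNlin : IsLinearMap ℂ N) (hNHP : IsHP N) (hNTP : IsTP N) :
    nu (M ∘ N) ≤ nu M + nu N := by
  rcases isEmpty_or_nonempty (Fin d) with hd | hd
  · simp only [nu_of_isEmpty, add_zero, le_refl]
  obtain ⟨a, ha⟩ := decompCosts_nonempty hMlin hMHP hMTP
  obtain ⟨b, hb⟩ := decompCosts_nonempty hNlin hNHP hNTP
  have hM := one_le_sInf_decompCosts hMTP ⟨a, ha⟩
  have hN := one_le_sInf_decompCosts hNTP ⟨b, hb⟩
  have hMN := one_le_sInf_decompCosts (hMTP.comp hNTP) ⟨a * b, mul_mem_decompCosts hMlin ha hb⟩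
  have hprod : sInf (decompCosts (M ∘ N)) ≤ sInf (decompCosts M) * sInf (decompCosts N) :=
    Real.sInf_le_sInf_mul_sInf ⟨a, ha⟩ ⟨b, hb⟩ (fun _ => nonneg_of_mem_decompCosts)
      (fun _ => nonneg_of_mem_decompCosts) (bddBelow_decompCosts _)
      fun _ ha' _ hb' => mul_mem_decompCosts hMlin ha' hb'
  rw [nu, nu, nu, ← Real.logb_mul (by linarith) (by linarith)]
  exact Real.logb_le_logb_of_le one_lt_two (by linarith) hprod

end
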